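/- arXiv:2503.13186 — 2 statements merged into one kernel-verified Lean document; each statement's English description precedes it below -/
import Mathlib

section
/- Fix N ≥ 1 and real numbers a, b with a ≠ b. Let J ∈ ℝ^{(N+1)×(N+1)} be the matrix whose entries are J_{i,i} = a and J_{i,i+1} = b for 1 ≤ i ≤ N, J_{N+1,j} = C(N, j−1) (binomial coefficient) for 1 ≤ j ≤ N+1, and all other entries zero. Then det J = (a − b)^N. In particular J is invertible. -/
/-!
Expanding along the first column, the matrix with diagonal `a`, superdiagonal `b` and last
row `w` satisfies `det M(w) = a * det M(w ∘ succ) + (-1)^n b^n w₀`, since deleting the last row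
and the first column leaves a lower triangular matrix with diagonal `b`. Hence
`det M(w) = ∑ⱼ (-1)^(j+n) aʲ bⁿ⁻ʲ wⱼ`, which for `wⱼ = C(n, j)` is the binomial expansion of
`(a - b)ⁿ`.
-/

open Matrix

namespace Matrix

variable {R : Type*} [CommRing R]

def bidiagLastRow (n : ℕ) (a b : R) (w : Fin (n + 1) → R) : Matrix (Fin (n + 1)) (Fin (n + 1)) R :=
  fun i j => if (i : ℕ) < n then
      (if j = i then a else if (j : ℕ) = (i : ℕ) + 1 then b else 0)
    else w j

variable {n : ℕ} {a b : R}

lemma bidiagLastRow_succ_zero (w : Fin (n + 2) → R) (i : Fin (n + 1)) :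
    bidiagLastRow (n + 1) a b w i.succ 0 = if i = Fin.last n then w 0 else 0 := by
  split_ifs with hi
  · simp [bidiagLastRow, hi]
  · have : (i : ℕ) < n := Fin.val_lt_last hi
    simp only [bidiagLastRow, Fin.val_succ, Fin.ext_iff]
    simp [this]

lemma bidiagLastRow_submatrix_succ (w : Fin (n + 2) → R) :
    (bidiagLastRow (n + 1) a b w).submatrix Fin.succ Fin.succ =
      bidiagLastRow n a b (w ∘ Fin.succ) := by
  ext i j
  simp [bidiagLastRow]

lemma det_bidiagLastRow_submatrix_castSucc_succ (w : Fin (n + 2) → R) :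
    ((bidiagLastRow (n + 1) a b w).submatrix Fin.castSucc Fin.succ).det = b ^ (n + 1) := by
  rw [det_of_isLowerTriangular]
  · simp [bidiagLastRow, Fin.ext_iff, Fin.is_le]
  · intro i j (hij : (i : ℕ) < j)
    simp only [submatrix_apply, bidiagLastRow, Fin.ext_iff, Fin.val_succ, Fin.val_castSucc]
    rw [if_pos i.isLt, if_neg (by omega), if_neg (by omega)]

theorem det_bidiagLastRow (w : Fin (n + 1) → R) :
    (bidiagLastRow n a b w).det =
      ∑ j : Fin (n + 1), (-1) ^ ((j : ℕ) + n) * a ^ (j : ℕ) * b ^ (n - j) * w j := by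
  induction n with
  | zero => simp [bidiagLastRow]
  | succ n ih =>
    rw [det_succ_column_zero, Fin.sum_univ_succ]
    simp only [bidiagLastRow_succ_zero, mul_ite, ite_mul, mul_zero, zero_mul,
      Finset.sum_ite_eq', Finset.mem_univ, if_true, Fin.succ_last, Fin.succAbove_zero,
      Fin.succAbove_last, bidiagLastRow_submatrix_succ,
      det_bidiagLastRow_submatrix_castSucc_succ, ih]
    have h00 : bidiagLastRow (n + 1) a b w 0 0 = a := by simp [bidiagLastRow]
    rw [Fin.sum_univ_succ (n := n + 1), add_comm, h00, Finset.mul_sum]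
    congr 1
    · simp only [Fin.val_last, Fin.val_zero, Nat.sub_zero, Nat.succ_eq_add_one]
      ring
    · refine Finset.sum_congr rfl fun j _ => ?_
      simp only [Fin.val_succ, Fin.val_zero, Function.comp_apply, Nat.add_sub_add_right]
      ring

theorem det_bidiagLastRow_choose :
    (bidiagLastRow n a b fun j => (n.choose j : R)).det = (a - b) ^ n := by
  rw [det_bidiagLastRow, sub_pow, ← Fin.sum_univ_eq_sum_range]

end Matrix

theorem stmt_4_general (N : ℕ) (a b : ℝ) (hab : a ≠ b)
    (J : Matrix (Fin (N+1)) (Fin (N+1)) ℝ)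
    (hJ : ∀ i j : Fin (N+1), J i j =
      if (i : ℕ) < N then
        (if j = i then a else if (j : ℕ) = (i : ℕ) + 1 then b else 0)
      else (N.choose (j : ℕ) : ℝ)) :
    J.det = (a - b) ^ N ∧ IsUnit J := by
  obtain rfl : J = bidiagLastRow N a b fun j => (N.choose j : ℝ) := Matrix.ext hJ
  have hdet := det_bidiagLastRow_choose (n := N) (a := a) (b := b)
  refine ⟨hdet, (isUnit_iff_isUnit_det _).2 ?_⟩
  rw [hdet]
  exact (pow_ne_zero N (sub_ne_zero.2 hab)).isUnit

/-- Determinant of the matrix `J^{(N)}_{αβ}` (β ≠ α): diagonal `a`, superdiagonal `b`,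
last row of binomial coefficients. -/
theorem stmt_4 (N : ℕ) (hN : 1 ≤ N) (a b : ℝ) (hab : a ≠ b)
    (J : Matrix (Fin (N+1)) (Fin (N+1)) ℝ)
    (hJ : ∀ i j : Fin (N+1), J i j =
      if (i : ℕ) < N then
        (if j = i then a else if (j : ℕ) = (i : ℕ) + 1 then b else 0)
      else (N.choose (j : ℕ) : ℝ)) :
    J.det = (a - b) ^ N ∧ IsUnit J :=
  stmt_4_general N a b hab J hJ
end

section
/- With J as in the previous context (diagonal a, superdiagonal b ≠ 0, a ≠ b, last row of binomial coefficients C(N,·)), the rows of J^{-1} satisfy the recurrence (J^{-1})_l = (1/b) e_{l−1}^T − (a/b)(J^{-1})_{l−1} for 2 ≤ l ≤ N+1, where (J^{-1})_l denotes the l-th row of J^{-1} and e_{l−1} the (l−1)-th standard basis vector of ℝ^{N+1}. -/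
/-!
Row `i < N` of `J` pairs a vector `v` to `a v_i + b v_{i+1}`. Hence a kernel vector of `J` is
geometric with ratio `-a/b`, and the binomial last row evaluates it to `(1 - a/b)^N v_0`, which
vanishes only if `v_0 = 0` because `a ≠ b`; so `J` is invertible. Reading `J J⁻¹ = 1` along row
`i < N` then gives `a (J⁻¹)_i + b (J⁻¹)_{i+1} = e_i`, which is the recurrence.
-/

open Matrix

variable {K : Type*} [Field K]

def binomialBidiagonal (N : ℕ) (a b : K) : Matrix (Fin (N + 1)) (Fin (N + 1)) K :=
  of fun i j =>
    if (i : ℕ) < N then (if j = i then a else if (j : ℕ) = i + 1 then b else 0)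
    else N.choose j

namespace binomialBidiagonal

variable {N : ℕ} {a b : K}

theorem mulVec_castSucc (i : Fin N) (v : Fin (N + 1) → K) :
    (binomialBidiagonal N a b *ᵥ v) i.castSucc = a * v i.castSucc + b * v i.succ := by
  have hrow : binomialBidiagonal N a b i.castSucc =
      fun j => (if j = i.castSucc then a else 0) + (if j = i.succ then b else 0) := by
    ext j
    simp only [binomialBidiagonal, of_apply, Fin.ext_iff, Fin.val_castSucc, Fin.val_succ,
      i.is_lt, if_true]
    split_ifs <;> first | omega | simp
  simp [mulVec, dotProduct, hrow, add_mul, Finset.sum_add_distrib]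

theorem mulVec_last (v : Fin (N + 1) → K) :
    (binomialBidiagonal N a b *ᵥ v) (Fin.last N) =
      ∑ j : Fin (N + 1), (N.choose j : K) * v j := by
  simp [mulVec, dotProduct, binomialBidiagonal]

theorem eq_pow_mul_of_mulVec_eq_zero (hb : b ≠ 0) {v : Fin (N + 1) → K}
    (hv : binomialBidiagonal N a b *ᵥ v = 0) (k : Fin (N + 1)) :
    v k = (-a / b) ^ (k : ℕ) * v 0 := by
  induction k using Fin.induction with
  | zero => simp
  | succ i ih =>
    have hrow := mulVec_castSucc (a := a) (b := b) i v
    rw [hv, Pi.zero_apply] at hrow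
    rw [Fin.val_castSucc] at ih
    rw [Fin.val_succ, pow_succ, mul_right_comm, ← ih]
    field_simp
    linear_combination -hrow

theorem mulVec_eq_zero_iff (hb : b ≠ 0) (hab : a ≠ b) {v : Fin (N + 1) → K} :
    binomialBidiagonal N a b *ᵥ v = 0 ↔ v = 0 := by
  refine ⟨fun hv => ?_, by rintro rfl; exact mulVec_zero _⟩
  have hgeom := eq_pow_mul_of_mulVec_eq_zero hb hv
  have hlast : (1 + -a / b) ^ N * v 0 = 0 := by
    calc (1 + -a / b) ^ N * v 0 = ∑ j : Fin (N + 1), (N.choose j : K) * v j := by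
          rw [add_comm, add_pow, Finset.sum_mul, ← Fin.sum_univ_eq_sum_range]
          exact Finset.sum_congr rfl fun k _ => by rw [hgeom k, one_pow]; ring
      _ = 0 := by rw [← mulVec_last, hv, Pi.zero_apply]
  have hbase : 1 + -a / b ≠ 0 := by
    rw [neg_div, ← sub_eq_add_neg, sub_ne_zero, ne_comm, ne_eq, div_eq_one_iff_eq hb]
    exact hab
  have hv0 : v 0 = 0 := (mul_eq_zero.mp hlast).resolve_left (pow_ne_zero N hbase)
  funext k
  rw [hgeom, hv0, mul_zero, Pi.zero_apply]

theorem det_ne_zero (hb : b ≠ 0) (hab : a ≠ b) : (binomialBidiagonal N a b).det ≠ 0 := by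
  rw [ne_eq, ← exists_mulVec_eq_zero_iff]
  rintro ⟨v, hv0, hv⟩
  exact hv0 ((mulVec_eq_zero_iff hb hab).mp hv)

theorem inv_apply_succ (hb : b ≠ 0) (hab : a ≠ b) (i : Fin N) (j : Fin (N + 1)) :
    (binomialBidiagonal N a b)⁻¹ i.succ j =
      b⁻¹ * (1 : Matrix _ _ K) i.castSucc j
        - a / b * (binomialBidiagonal N a b)⁻¹ i.castSucc j := by
  set J := binomialBidiagonal N a b
  have hrow := congrFun (congrFun (mul_nonsing_inv J (det_ne_zero hb hab).isUnit) i.castSucc) j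
  change (J *ᵥ fun k => J⁻¹ k j) i.castSucc = _ at hrow
  rw [mulVec_castSucc] at hrow
  field_simp
  linear_combination hrow

end binomialBidiagonal

/-- Row recurrence for the inverse of `J^{(N)}_{αβ}`:
`(J⁻¹)_l = (1/b) e_{l−1}ᵀ − (a/b)(J⁻¹)_{l−1}` for `2 ≤ l ≤ N+1` (1-based). -/
theorem stmt_7 (N : ℕ) (a b : ℝ) (hb : b ≠ 0) (hab : a ≠ b)
    (J : Matrix (Fin (N+1)) (Fin (N+1)) ℝ)
    (hJ : ∀ i j : Fin (N+1), J i j =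
      if (i : ℕ) < N then
        (if j = i then a else if (j : ℕ) = (i : ℕ) + 1 then b else 0)
      else (N.choose (j : ℕ) : ℝ)) :
    ∀ (l : ℕ) (hl : l < N), ∀ j : Fin (N+1),
      J⁻¹ ⟨l + 1, by omega⟩ j =
        (1 / b) * (if (j : ℕ) = l then 1 else 0) - (a / b) * J⁻¹ ⟨l, by omega⟩ j := by
  have hJ' : J = binomialBidiagonal N a b := Matrix.ext hJ
  subst hJ'
  intro l hl j
  refine (binomialBidiagonal.inv_apply_succ hb hab ⟨l, hl⟩ j).trans ?_
  simp only [one_apply, one_div, Fin.ext_iff, Fin.val_castSucc, eq_comm]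
  rfl
end
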